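/- arXiv:1804.06446 — 3 statements merged into one kernel-verified Lean document; each statement's English description precedes it below -/
import Mathlib

section
/- Sym_5 acts transitively by simultaneous conjugation on the set of its (2,4,5)-triples: if (x₁,x₂,x₃) and (y₁,y₂,y₃) are triples of elements of Sym_5 with orders 2, 4, 5 respectively and x₁x₂x₃ = y₁y₂y₃ = 1, then there exists g ∈ Sym_5 with y_i = g⁻¹ x_i g for i = 1, 2, 3. -/
private def c2 : Equiv.Perm (Fin 5) := c[1, 4, 3, 2]
private def c3 : Equiv.Perm (Fin 5) := c[0, 1, 2, 3, 4]

set_option maxRecDepth 100000 in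
set_option maxHeartbeats 4000000 in
private theorem key245 : ∀ x₂ x₃ : Equiv.Perm (Fin 5),
    (x₂ ^ 4 = 1 ∧ x₂ ^ 2 ≠ 1 ∧ x₃ ^ 5 = 1 ∧ x₃ ≠ 1 ∧
    (x₂ * x₃) ^ 2 = 1 ∧ x₂ * x₃ ≠ 1) →
    ∃ g : Equiv.Perm (Fin 5), x₂ = g⁻¹ * c2 * g ∧ x₃ = g⁻¹ * c3 * g := by decide

private theorem key245' (x₁ x₂ x₃ : Equiv.Perm (Fin 5))
    (hx₁ : orderOf x₁ = 2) (hx₂ : orderOf x₂ = 4) (hx₃ : orderOf x₃ = 5)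
    (hx : x₁ * x₂ * x₃ = 1) :
    ∃ g : Equiv.Perm (Fin 5), x₂ = g⁻¹ * c2 * g ∧ x₃ = g⁻¹ * c3 * g := by
  have h1 : x₁ * (x₂ * x₃) = 1 := by rw [← mul_assoc]; exact hx
  have h2 : x₂ * x₃ = x₁⁻¹ := eq_inv_of_mul_eq_one_right h1
  apply key245
  refine ⟨?_, ?_, ?_, ?_, ?_, ?_⟩
  · have := pow_orderOf_eq_one x₂; rwa [hx₂] at this
  · intro h
    have := orderOf_dvd_of_pow_eq_one h
    rw [hx₂] at this; norm_num at this
  · have := pow_orderOf_eq_one x₃; rwa [hx₃] at this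
  · intro h; rw [h, orderOf_one] at hx₃; norm_num at hx₃
  · rw [h2, inv_pow]
    have := pow_orderOf_eq_one x₁; rw [hx₁] at this
    rw [this, inv_one]
  · rw [h2]
    intro h
    rw [inv_eq_one] at h
    rw [h, orderOf_one] at hx₁; norm_num at hx₁

theorem sym5_transitive_on_245_triples
    (x₁ x₂ x₃ y₁ y₂ y₃ : Equiv.Perm (Fin 5))
    (hx₁ : orderOf x₁ = 2) (hx₂ : orderOf x₂ = 4) (hx₃ : orderOf x₃ = 5)
    (hy₁ : orderOf y₁ = 2) (hy₂ : orderOf y₂ = 4) (hy₃ : orderOf y₃ = 5)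
    (hx : x₁ * x₂ * x₃ = 1) (hy : y₁ * y₂ * y₃ = 1) :
    ∃ g : Equiv.Perm (Fin 5),
      y₁ = g⁻¹ * x₁ * g ∧ y₂ = g⁻¹ * x₂ * g ∧ y₃ = g⁻¹ * x₃ * g := by
  obtain ⟨g, hg2, hg3⟩ := key245' x₁ x₂ x₃ hx₁ hx₂ hx₃ hx
  obtain ⟨h, hh2, hh3⟩ := key245' y₁ y₂ y₃ hy₁ hy₂ hy₃ hy
  refine ⟨g⁻¹ * h, ?_, ?_, ?_⟩
  · have ex : x₁ = (x₂ * x₃)⁻¹ := by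
      have : x₁ * (x₂ * x₃) = 1 := by rw [← mul_assoc]; exact hx
      exact eq_inv_of_mul_eq_one_left this
    have ey : y₁ = (y₂ * y₃)⁻¹ := by
      have : y₁ * (y₂ * y₃) = 1 := by rw [← mul_assoc]; exact hy
      exact eq_inv_of_mul_eq_one_left this
    rw [ex, ey, hg2, hg3, hh2, hh3]
    group
  · rw [hg2, hh2]; group
  · rw [hg3, hh3]; group
end

section
/- Every (2,4,5)-triple of Sym_5 generates the whole group Sym_5: if x, y, z ∈ Sym_5 have orders 2, 4, 5 respectively and x*y*z = 1, then the subgroup generated by {x, y, z} is all of Sym_5. -/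
open Equiv Equiv.Perm

theorem triple_245_generates_sym5
    (x y z : Equiv.Perm (Fin 5))
    (hx : orderOf x = 2) (hy : orderOf y = 4) (hz : orderOf z = 5)
    (h : x * y * z = 1) :
    Subgroup.closure ({x, y, z} : Set (Equiv.Perm (Fin 5))) = ⊤ := by
  have hcard : Fintype.card (Fin 5) = 5 := by simp
  -- z is a 5-cycle with full support
  obtain ⟨n, hn⟩ := Equiv.Perm.cycleType_prime_order (σ := z) (by rw [hz]; norm_num)
  rw [hz] at hn
  have hzsum := z.sum_cycleType
  have hzle : z.support.card ≤ 5 := le_trans (Finset.card_le_univ _) (le_of_eq hcard)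
  rw [hn, Multiset.sum_replicate, smul_eq_mul] at hzsum
  have hn0 : n = 0 := by omega
  subst hn0
  have hzc : z.cycleType = {5} := by simpa using hn
  have hzcyc : z.IsCycle := Equiv.Perm.card_cycleType_eq_one.mp (by rw [hzc]; rfl)
  have hzsupp : z.support = Finset.univ := by
    apply Finset.eq_univ_of_card
    rw [← z.sum_cycleType, hzc, hcard]; rfl
  have hzsign : Equiv.Perm.sign z = 1 := by
    rw [Equiv.Perm.sign_of_cycleType, hzc]; decide
  -- y is a 4-cycle
  have hylcm : y.cycleType.lcm = 4 := by rw [Equiv.Perm.lcm_cycleType, hy]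
  have hysum := y.sum_cycleType
  have hyle : y.support.card ≤ 5 := le_trans (Finset.card_le_univ _) (le_of_eq hcard)
  have h4mem : (4 : ℕ) ∈ y.cycleType := by
    by_contra h4
    have : ∀ a ∈ y.cycleType, a ∣ 2 := by
      intro a ha
      have had : a ∣ 4 := hylcm ▸ Multiset.dvd_lcm ha
      have ha2 : 2 ≤ a := Equiv.Perm.two_le_of_mem_cycleType ha
      have ha4 : a ≤ 4 := Nat.le_of_dvd (by norm_num) had
      interval_cases a <;> simp_all <;> omega
    have : y.cycleType.lcm ∣ 2 := Multiset.lcm_dvd.mpr this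
    rw [hylcm] at this
    omega
  have hyc : y.cycleType = {4} := by
    obtain ⟨t, ht⟩ := Multiset.exists_cons_of_mem h4mem
    have ht0 : t = 0 := by
      by_contra ht0
      obtain ⟨a, ha⟩ := Multiset.exists_mem_of_ne_zero ht0
      have ha2 : 2 ≤ a := Equiv.Perm.two_le_of_mem_cycleType (by rw [ht]; exact Multiset.mem_cons_of_mem ha)
      have : a ≤ t.sum := Multiset.le_sum_of_mem ha
      rw [ht, Multiset.sum_cons] at hysum
      omega
    rw [ht, ht0]; rfl
  have hysign : Equiv.Perm.sign y = -1 := by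
    rw [Equiv.Perm.sign_of_cycleType, hyc]; decide
  -- x is a swap
  obtain ⟨m, hm⟩ := Equiv.Perm.cycleType_prime_order (σ := x) (by rw [hx]; norm_num)
  rw [hx] at hm
  have hxsum := x.sum_cycleType
  have hxle : x.support.card ≤ 5 := le_trans (Finset.card_le_univ _) (le_of_eq hcard)
  rw [hm, Multiset.sum_replicate, smul_eq_mul] at hxsum
  have hxsign : Equiv.Perm.sign x = -1 := by
    have := congrArg Equiv.Perm.sign h
    rw [map_mul, map_mul, hysign, hzsign, map_one] at this
    have h1 : Equiv.Perm.sign x * -1 = 1 := by simpa using this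
    rcases Int.units_eq_one_or (Equiv.Perm.sign x) with hs | hs <;> simp [hs] at h1 ⊢
  have hm0 : m = 0 := by
    have hm2 : m ≤ 1 := by omega
    interval_cases m
    · rfl
    · exfalso
      rw [Equiv.Perm.sign_of_cycleType, hm] at hxsign
      simp [Multiset.sum_replicate] at hxsign
      revert hxsign; decide
  subst hm0
  have hxswap : x.IsSwap := by
    rw [← Equiv.Perm.card_support_eq_two]
    rw [← x.sum_cycleType, hm]; rfl
  -- conclude
  have key : Subgroup.closure ({z, x} : Set (Equiv.Perm (Fin 5))) = ⊤ :=
    Equiv.Perm.closure_prime_cycle_swap (by rw [hcard]; norm_num) hzcyc hzsupp hxswap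
  rw [eq_top_iff, ← key]
  apply Subgroup.closure_mono
  intro a ha
  simp only [Set.mem_insert_iff, Set.mem_singleton_iff] at ha ⊢
  tauto
end

section
/- The alternating group Alt_5 is generated by elements x, y, z of orders 2, 5, 5 respectively satisfying x*y*z = 1, i.e. Alt_5 is a (2,5,5)-group. -/
set_option maxRecDepth 4000
set_option maxHeartbeats 1000000

open Equiv Equiv.Perm

private def X5 : Equiv.Perm (Fin 5) := c[0, 2] * c[1, 3]
private def Y5 : Equiv.Perm (Fin 5) := c[0, 1, 2, 3, 4]

private instance : Fact (Nat.Prime 5) := ⟨by norm_num⟩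

private lemma hX5mem : X5 ∈ alternatingGroup (Fin 5) :=
  Equiv.Perm.mem_alternatingGroup.mpr (by decide)
private lemma hY5mem : Y5 ∈ alternatingGroup (Fin 5) :=
  Equiv.Perm.mem_alternatingGroup.mpr (by decide)

private lemma ordX5 : orderOf X5 = 2 :=
  orderOf_eq_prime (by decide) (by decide)

private lemma ordY5 : orderOf Y5 = 5 :=
  orderOf_eq_prime (by decide) (by decide)

private lemma ordXY5 : orderOf (X5 * Y5) = 5 :=
  orderOf_eq_prime (by decide) (by decide)

private lemma ordXYY5 : orderOf (X5 * Y5 * Y5) = 3 :=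
  orderOf_eq_prime (by decide) (by decide)

private lemma card_A5 : Nat.card (alternatingGroup (Fin 5)) = 60 := by
  have h2 := two_mul_card_alternatingGroup (α := Fin 5)
  rw [Fintype.card_perm, Fintype.card_fin] at h2
  have h120 : Nat.factorial 5 = 120 := by norm_num [Nat.factorial]
  rw [h120] at h2
  rw [Nat.card_eq_fintype_card]
  omega

private lemma subgroup_top_of_dvd (H : Subgroup (alternatingGroup (Fin 5)))
    (h2 : 2 ∣ Nat.card H) (h3 : 3 ∣ Nat.card H) (h5 : 5 ∣ Nat.card H) : H = ⊤ := by
  have h30 : 30 ∣ Nat.card H := by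
    have h6 : 6 ∣ Nat.card H :=
      (by norm_num : Nat.Coprime 2 3).mul_dvd_of_dvd_of_dvd h2 h3
    exact (by norm_num : Nat.Coprime 6 5).mul_dvd_of_dvd_of_dvd h6 h5
  have hdvd60 : Nat.card H ∣ 60 := card_A5 ▸ Subgroup.card_subgroup_dvd_card H
  obtain ⟨m, hm⟩ := h30
  have hm2 : m ∣ 2 := by
    have : 30 * m ∣ 30 * 2 := by rw [← hm]; exact hdvd60
    exact (Nat.mul_dvd_mul_iff_left (by norm_num)).mp this
  have hmpos : 1 ≤ m := by
    rcases Nat.eq_zero_or_pos m with h0 | h1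
    · exfalso
      have := Nat.card_pos (α := H)
      omega
    · exact h1
  have hmle : m ≤ 2 := Nat.le_of_dvd (by norm_num) hm2
  interval_cases m
  · -- card H = 30, index 2, normal, contradiction with simplicity
    exfalso
    have hcardH : Nat.card H = 30 := by omega
    have hidx : H.index = 2 := by
      have := Subgroup.card_mul_index H
      rw [hcardH, card_A5] at this
      omega
    have hnormal : H.Normal := by
      constructor
      intro n hn g
      rw [Subgroup.mul_mem_iff_of_index_two hidx,
        Subgroup.mul_mem_iff_of_index_two hidx, H.inv_mem_iff]
      tauto
    rcases hnormal.eq_bot_or_eq_top with hbot | htop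
    · rw [hbot] at hcardH
      simp at hcardH
    · rw [htop, Subgroup.card_top, card_A5] at hcardH
      omega
  · exact Subgroup.eq_top_of_card_eq H (by rw [card_A5]; omega)

theorem alt5_is_255_group :
    ∃ x y z : alternatingGroup (Fin 5),
      orderOf x = 2 ∧ orderOf y = 5 ∧ orderOf z = 5 ∧ x * y * z = 1 ∧
      Subgroup.closure ({x, y, z} : Set (alternatingGroup (Fin 5))) = ⊤ := by
  set x : alternatingGroup (Fin 5) := ⟨X5, hX5mem⟩ with hxdef
  set y : alternatingGroup (Fin 5) := ⟨Y5, hY5mem⟩ with hydef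
  have hox : orderOf x = 2 := by
    rw [← orderOf_submonoid (x : ↥(alternatingGroup (Fin 5)))]; exact ordX5
  have hoy : orderOf y = 5 := by
    rw [← orderOf_submonoid (y : ↥(alternatingGroup (Fin 5)))]; exact ordY5
  have hoxy : orderOf (x * y) = 5 := by
    rw [← orderOf_submonoid (x * y)]; exact ordXY5
  have hoxyy : orderOf (x * y * y) = 3 := by
    rw [← orderOf_submonoid (x * y * y)]; exact ordXYY5
  refine ⟨x, y, (x * y)⁻¹, hox, hoy, ?_, mul_inv_cancel _, ?_⟩
  · rw [orderOf_inv]; exact hoxy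
  · set H := Subgroup.closure ({x, y, (x * y)⁻¹} : Set (alternatingGroup (Fin 5))) with hH
    have hx : x ∈ H := Subgroup.subset_closure (by simp)
    have hy : y ∈ H := Subgroup.subset_closure (by simp)
    have hxy : x * y ∈ H := H.mul_mem hx hy
    have hw : x * y * y ∈ H := H.mul_mem hxy hy
    have key : ∀ a : alternatingGroup (Fin 5), ∀ ha : a ∈ H,
        orderOf a ∣ Nat.card H := by
      intro a ha
      have := orderOf_dvd_natCard (⟨a, ha⟩ : H)
      rwa [Subgroup.orderOf_mk] at this
    refine subgroup_top_of_dvd H ?_ ?_ ?_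
    · have := key x hx; rwa [hox] at this
    · have := key (x * y * y) hw; rwa [hoxyy] at this
    · have := key (x * y) hxy; rwa [hoxy] at this
end
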